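/- For the Gaussian moment problem (PG)₃ — minimize ∫_ℝ x(t) ln x(t) dt over measurable x ≥ 0 subject to ∫ x dt = b₁, ∫ t x dt = b₂, ∫ t² x dt = b₃ — with b₁, b₃ > 0 and |b₂| < √(b₁b₃), the unique optimal solution is x̄(t) = (b₁²/√(2π(b₁b₃ - b₂²))) · exp(-½ · b₁²(t - b₂/b₁)²/(b₁b₃ - b₂²)) and the optimal value is b₁ ln(b₁²/√(2πe(b₁b₃ - b₂²))). In particular, for b = (1, 0, σ²) with σ > 0, the solution is the Gaussian density (2πσ²)^{-1/2} e^{-t²/(2σ²)} with value -ln√(2πeσ²). -/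

import Mathlib

open MeasureTheory ENNReal Filter Set Topology

/-- Positive part of an extended real, in `ℝ≥0∞`. -/
noncomputable def epos (a : EReal) : ℝ≥0∞ := if a = ⊤ then ⊤ else ENNReal.ofReal a.toReal

/-- Extended integral `∫ f dμ := ∫ f₊ dμ - ∫ f₋ dμ` with the convention `∞ - ∞ := ∞`. -/
noncomputable def eintegral {T : Type*} [MeasurableSpace T] (μ : Measure T) (f : T → EReal) :
    EReal :=
  if (∫⁻ t, epos (f t) ∂μ) = ⊤ then ⊤
  else ((∫⁻ t, epos (f t) ∂μ : ℝ≥0∞) : EReal) - ((∫⁻ t, epos (- f t) ∂μ : ℝ≥0∞) : EReal)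


/-- The integral functional Phi(x) := extended integral of phi(x(.)) with respect to mu. -/
noncomputable def Phi {T : Type*} [MeasurableSpace T] (μ : Measure T) (φ : ℝ → EReal)
    (x : T → ℝ) : EReal := eintegral μ (fun t => φ (x t))

/-- The Boltzmann–Shannon entropy `φ(u) = u ln u` for `u ≥ 0` (with `0 ln 0 = 0`), `φ(u) = ∞`
for `u < 0`. -/
noncomputable def phiBS : ℝ → EReal :=
  fun u => if u < 0 then ⊤ else ((u * Real.log u : ℝ) : EReal)

/-!
The Gaussian `x̄` has `log x̄ = c₀ + c₁ t + c₂ t²`, i.e. `φ'(x̄) = 1 + log x̄` is a combination of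
the constraint functions `1, t, t²` (the Lagrange condition). Integrating the tangent-line
inequality `u log u ≥ u log v + u - v` (strict unless `u = v`) at `v = x̄(t)` gives, for every
feasible `x`, `Φ(x) ≥ ∫ (x log x̄ + x - x̄) = c₀ b₁ + c₁ b₂ + c₂ b₃ = Φ(x̄)`, since the middle
integral only sees the moments of `x`; equality forces `x = x̄` a.e. If `x log x` is not
integrable, this integrable lower bound makes `Φ(x) = ∞`. The moments of `x̄` are those of `b₁`
times the normal density with mean `b₂ / b₁` and variance `(b₁ b₃ - b₂²) / b₁²`.
-/

open Real ProbabilityTheory InformationTheory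
open scoped NNReal

section ExtendedIntegral

variable {T : Type*} [MeasurableSpace T] {μ : Measure T}

lemma epos_coe (r : ℝ) : epos (r : EReal) = ENNReal.ofReal r := by
  simp [epos]

lemma epos_neg_coe (r : ℝ) : epos (-(r : EReal)) = ENNReal.ofReal (-r) := by
  rw [← EReal.coe_neg, epos_coe]

lemma lintegral_ofReal_ne_top_of_integrable {f : T → ℝ} (hf : Integrable f μ) :
    ∫⁻ t, ENNReal.ofReal (f t) ∂μ ≠ ⊤ :=
  ((lintegral_mono fun t => Real.ofReal_le_enorm (f t)).trans_lt hf.2).ne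

lemma eintegral_congr_ae {f g : T → EReal} (h : f =ᵐ[μ] g) : eintegral μ f = eintegral μ g := by
  have hpos : ∫⁻ t, epos (f t) ∂μ = ∫⁻ t, epos (g t) ∂μ :=
    lintegral_congr_ae (h.mono fun _ ht => congrArg epos ht)
  have hneg : ∫⁻ t, epos (-f t) ∂μ = ∫⁻ t, epos (-g t) ∂μ :=
    lintegral_congr_ae (h.mono fun _ ht => congrArg (fun a => epos (-a)) ht)
  simp only [eintegral, hpos, hneg]

lemma eintegral_coe {f : T → ℝ} (hf : Integrable f μ) :
    eintegral μ (fun t => (f t : EReal)) = (∫ t, f t ∂μ : ℝ) := by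
  have hpos := lintegral_ofReal_ne_top_of_integrable hf
  have hneg := lintegral_ofReal_ne_top_of_integrable hf.neg
  simp only [Pi.neg_apply] at hneg
  simp only [eintegral, epos_coe, epos_neg_coe, if_neg hpos]
  rw [integral_eq_lintegral_pos_part_sub_lintegral_neg_part hf, EReal.coe_sub,
    EReal.coe_ennreal_toReal hpos, EReal.coe_ennreal_toReal hneg]

lemma eintegral_coe_eq_top_of_not_integrable {g h : T → ℝ} (hg : Integrable g μ)
    (hgh : g ≤ᵐ[μ] h) (hh : AEMeasurable h μ) (hnot : ¬Integrable h μ) :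
    eintegral μ (fun t => (h t : EReal)) = ⊤ := by
  have hneg : ∫⁻ t, ENNReal.ofReal (-h t) ∂μ ≠ ⊤ :=
    ne_top_of_le_ne_top (lintegral_ofReal_ne_top_of_integrable hg.neg)
      (lintegral_mono_ae (hgh.mono fun t ht => ENNReal.ofReal_le_ofReal (neg_le_neg ht)))
  have hpos : ∫⁻ t, ENNReal.ofReal (h t) ∂μ = ⊤ := by
    by_contra hpos
    refine hnot ⟨hh.aestronglyMeasurable, ?_⟩
    calc ∫⁻ t, ‖h t‖ₑ ∂μ = ∫⁻ t, ENNReal.ofReal (h t) + ENNReal.ofReal (-h t) ∂μ := by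
          refine lintegral_congr fun t => ?_
          rw [Real.enorm_eq_ofReal_abs]
          rcases le_total 0 (h t) with ht | ht
          · rw [abs_of_nonneg ht, ENNReal.ofReal_of_nonpos (neg_nonpos.2 ht), add_zero]
          · rw [abs_of_nonpos ht, ENNReal.ofReal_of_nonpos ht, zero_add]
      _ = ∫⁻ t, ENNReal.ofReal (h t) ∂μ + ∫⁻ t, ENNReal.ofReal (-h t) ∂μ :=
          lintegral_add_left' hh.ennreal_ofReal _
      _ < ⊤ := ENNReal.add_lt_top.2 ⟨lt_top_iff_ne_top.2 hpos, lt_top_iff_ne_top.2 hneg⟩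
  simp only [eintegral, epos_coe, if_pos hpos]

end ExtendedIntegral

section Entropy

variable {T : Type*} [MeasurableSpace T] {μ : Measure T}

lemma phiBS_of_nonneg {u : ℝ} (hu : 0 ≤ u) : phiBS u = (u * log u : ℝ) :=
  if_neg hu.not_gt

lemma Phi_phiBS_of_ae_nonneg {x : T → ℝ} (hx : 0 ≤ᵐ[μ] x) :
    Phi μ phiBS x = eintegral μ (fun t => (x t * log (x t) : ℝ)) :=
  eintegral_congr_ae (hx.mono fun _ ht => phiBS_of_nonneg ht)

lemma mul_log_sub_eq_mul_klFun {u v : ℝ} (hu : 0 ≤ u) (hv : 0 < v) :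
    u * log u - (u * log v + u - v) = v * klFun (u / v) := by
  rcases hu.eq_or_lt with rfl | hu
  · simp [klFun_zero]
  · rw [klFun_apply, log_div hu.ne' hv.ne']
    field_simp
    ring

lemma mul_log_add_sub_le_mul_log {u v : ℝ} (hu : 0 ≤ u) (hv : 0 < v) :
    u * log v + u - v ≤ u * log u := by
  have := mul_nonneg hv.le (klFun_nonneg (div_nonneg hu hv.le))
  linarith [mul_log_sub_eq_mul_klFun hu hv]

lemma eq_of_mul_log_eq_mul_log_add_sub {u v : ℝ} (hu : 0 ≤ u) (hv : 0 < v)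
    (h : u * log u = u * log v + u - v) : u = v := by
  have hkl : klFun (u / v) = 0 := by
    have := mul_log_sub_eq_mul_klFun hu hv
    rw [h, sub_self, eq_comm, mul_eq_zero] at this
    exact this.resolve_left hv.ne'
  rwa [klFun_eq_zero_iff (div_nonneg hu hv.le), div_eq_one_iff_eq hv.ne'] at hkl

theorem integral_le_Phi_phiBS {x y : T → ℝ} (hx : Measurable x) (hx0 : 0 ≤ᵐ[μ] x)
    (hy : ∀ᵐ t ∂μ, 0 < y t) (hint : Integrable (fun t => x t * log (y t) + x t - y t) μ) :
    ((∫ t, x t * log (y t) + x t - y t ∂μ : ℝ) : EReal) ≤ Phi μ phiBS x ∧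
      (Phi μ phiBS x = (∫ t, x t * log (y t) + x t - y t ∂μ : ℝ) → x =ᵐ[μ] y) := by
  have hle : (fun t => x t * log (y t) + x t - y t) ≤ᵐ[μ] fun t => x t * log (x t) := by
    filter_upwards [hx0, hy] with t hxt hyt using mul_log_add_sub_le_mul_log hxt hyt
  rw [Phi_phiBS_of_ae_nonneg hx0]
  by_cases hent : Integrable (fun t => x t * log (x t)) μ
  swap
  · rw [eintegral_coe_eq_top_of_not_integrable hint hle
      (hx.mul (measurable_log.comp hx)).aemeasurable hent]
    exact ⟨le_top, fun h => absurd h.symm (EReal.coe_ne_top _)⟩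
  rw [eintegral_coe hent, EReal.coe_le_coe_iff]
  refine ⟨integral_mono_ae hint hent hle, fun h => ?_⟩
  have hgap : ∫ t, x t * log (x t) - (x t * log (y t) + x t - y t) ∂μ = 0 := by
    rw [integral_sub hent hint, EReal.coe_eq_coe_iff.1 h, sub_self]
  have hgap0 := (integral_eq_zero_iff_of_nonneg_ae (hle.mono fun t ht => sub_nonneg.2 ht)
    (hent.sub hint)).1 hgap
  filter_upwards [hgap0, hx0, hy] with t ht hxt hyt
  exact eq_of_mul_log_eq_mul_log_add_sub hxt hyt (sub_eq_zero.1 ht)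

theorem Phi_phiBS_le_of_integral_mul_log_eq {x xbar : T → ℝ} (hx : Measurable x)
    (hx0 : 0 ≤ᵐ[μ] x) (hxbar : ∀ᵐ t ∂μ, 0 < xbar t) (hx_int : Integrable x μ)
    (hxbar_int : Integrable xbar μ) (hxlog : Integrable (fun t => x t * log (xbar t)) μ)
    (hxbarlog : Integrable (fun t => xbar t * log (xbar t)) μ)
    (hmass : ∫ t, x t ∂μ = ∫ t, xbar t ∂μ)
    (hlog : ∫ t, x t * log (xbar t) ∂μ = ∫ t, xbar t * log (xbar t) ∂μ) :
    Phi μ phiBS xbar ≤ Phi μ phiBS x ∧ (Phi μ phiBS x = Phi μ phiBS xbar → x =ᵐ[μ] xbar) := by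
  have hsum : Integrable (fun t => x t * log (xbar t) + x t) μ := hxlog.add hx_int
  have hPhi : Phi μ phiBS xbar = (∫ t, x t * log (xbar t) + x t - xbar t ∂μ : ℝ) := by
    rw [Phi_phiBS_of_ae_nonneg (hxbar.mono fun _ ht => ht.le), eintegral_coe hxbarlog,
      integral_sub hsum hxbar_int, integral_add hxlog hx_int, hlog, hmass, add_sub_cancel_right]
  rw [hPhi]
  exact integral_le_Phi_phiBS hx hx0 hxbar (hsum.sub hxbar_int)

end Entropy

section Moments

def HasMoments (x : ℝ → ℝ) (b₁ b₂ b₃ : ℝ) : Prop :=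
  Integrable x ∧ Integrable (fun t => t * x t) ∧ Integrable (fun t => t ^ 2 * x t) ∧
    (∫ t, x t) = b₁ ∧ (∫ t, t * x t) = b₂ ∧ (∫ t, t ^ 2 * x t) = b₃

def momentConstraintSet (b₁ b₂ b₃ : ℝ) : Set (ℝ → ℝ) :=
  {x | Measurable x ∧ (∀ᵐ t, 0 ≤ x t) ∧ HasMoments x b₁ b₂ b₃}

variable {x xbar : ℝ → ℝ} {b₁ b₂ b₃ : ℝ}

lemma HasMoments.integrable_mul_quadratic (h : HasMoments x b₁ b₂ b₃) (c₀ c₁ c₂ : ℝ) :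
    Integrable (fun t => x t * (c₀ + c₁ * t + c₂ * t ^ 2)) := by
  obtain ⟨h0, h1, h2, -⟩ := h
  have hcomb : Integrable (fun t => c₀ * x t + c₁ * (t * x t) + c₂ * (t ^ 2 * x t)) :=
    ((h0.const_mul c₀).add (h1.const_mul c₁)).add (h2.const_mul c₂)
  exact hcomb.congr (ae_of_all _ fun t => by ring)

lemma HasMoments.integral_mul_quadratic (h : HasMoments x b₁ b₂ b₃) (c₀ c₁ c₂ : ℝ) :
    ∫ t, x t * (c₀ + c₁ * t + c₂ * t ^ 2) = c₀ * b₁ + c₁ * b₂ + c₂ * b₃ := by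
  obtain ⟨h0, h1, h2, e0, e1, e2⟩ := h
  calc ∫ t, x t * (c₀ + c₁ * t + c₂ * t ^ 2)
      = ∫ t, c₀ * x t + c₁ * (t * x t) + c₂ * (t ^ 2 * x t) := by
        congr 1; ext t; ring
    _ = c₀ * b₁ + c₁ * b₂ + c₂ * b₃ := by
        have hlin : Integrable (fun t => c₀ * x t + c₁ * (t * x t)) :=
          (h0.const_mul c₀).add (h1.const_mul c₁)
        rw [integral_add hlin (h2.const_mul c₂),
          integral_add (h0.const_mul c₀) (h1.const_mul c₁), integral_const_mul,
          integral_const_mul, integral_const_mul, e0, e1, e2]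

theorem Phi_phiBS_le_of_log_eq_quadratic {c₀ c₁ c₂ : ℝ}
    (hlog : ∀ t, log (xbar t) = c₀ + c₁ * t + c₂ * t ^ 2) (hpos : ∀ t, 0 < xbar t)
    (hxbar : HasMoments xbar b₁ b₂ b₃) (hx : x ∈ momentConstraintSet b₁ b₂ b₃) :
    Phi volume phiBS xbar ≤ Phi volume phiBS x ∧
      (Phi volume phiBS x = Phi volume phiBS xbar → x =ᵐ[volume] xbar) := by
  obtain ⟨hx, hx0, hxm⟩ := hx
  refine Phi_phiBS_le_of_integral_mul_log_eq hx hx0 (ae_of_all _ hpos) hxm.1 hxbar.1 ?_ ?_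
    (hxm.2.2.2.1.trans hxbar.2.2.2.1.symm) ?_ <;> simp_rw [hlog]
  · exact hxm.integrable_mul_quadratic c₀ c₁ c₂
  · exact hxbar.integrable_mul_quadratic c₀ c₁ c₂
  · rw [hxm.integral_mul_quadratic, hxbar.integral_mul_quadratic]

theorem Phi_phiBS_eq_of_log_eq_quadratic {c₀ c₁ c₂ : ℝ}
    (hlog : ∀ t, log (xbar t) = c₀ + c₁ * t + c₂ * t ^ 2) (hpos : ∀ t, 0 < xbar t)
    (hxbar : HasMoments xbar b₁ b₂ b₃) :
    Phi volume phiBS xbar = (c₀ * b₁ + c₁ * b₂ + c₂ * b₃ : ℝ) := by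
  rw [Phi_phiBS_of_ae_nonneg (ae_of_all _ fun t => (hpos t).le)]
  simp_rw [hlog]
  rw [eintegral_coe (hxbar.integrable_mul_quadratic c₀ c₁ c₂), hxbar.integral_mul_quadratic]

end Moments

section Gaussian

variable {m : ℝ} {v : ℝ≥0}

lemma integrable_mul_gaussianPDFReal (hv : v ≠ 0) {f : ℝ → ℝ}
    (hf : Integrable f (gaussianReal m v)) : Integrable (fun t => f t * gaussianPDFReal m v t) := by
  rw [gaussianReal_of_var_ne_zero _ hv, integrable_withDensity_iff_integrable_smul'
    (measurable_gaussianPDF _ _) (ae_of_all _ fun _ => gaussianPDF_lt_top)] at hf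
  simpa only [toReal_gaussianPDF, smul_eq_mul, mul_comm] using hf

lemma integral_mul_gaussianPDFReal (hv : v ≠ 0) (f : ℝ → ℝ) :
    ∫ t, f t * gaussianPDFReal m v t = ∫ t, f t ∂gaussianReal m v := by
  simp_rw [integral_gaussianReal_eq_integral_smul hv, smul_eq_mul, mul_comm]

lemma integral_sq_gaussianReal : ∫ t, t ^ 2 ∂gaussianReal m v = v + m ^ 2 := by
  have h := variance_eq_sub (memLp_id_gaussianReal (μ := m) (v := v) 2)
  simp only [variance_id_gaussianReal, Pi.pow_apply, id, integral_id_gaussianReal] at h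
  linarith

lemma hasMoments_const_mul_gaussianPDFReal (hv : v ≠ 0) (c : ℝ) :
    HasMoments (fun t => c * gaussianPDFReal m v t) c (c * m) (c * (v + m ^ 2)) := by
  have hweighted : ∀ f : ℝ → ℝ, Integrable f (gaussianReal m v) →
      Integrable (fun t => f t * (c * gaussianPDFReal m v t)) ∧
        ∫ t, f t * (c * gaussianPDFReal m v t) = c * ∫ t, f t ∂gaussianReal m v := by
    intro f hf
    simp_rw [mul_left_comm (f _) c]
    exact ⟨(integrable_mul_gaussianPDFReal hv hf).const_mul c,
      by rw [integral_const_mul, integral_mul_gaussianPDFReal hv]⟩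
  obtain ⟨hint₁, heq₁⟩ := hweighted (fun t => t)
    (memLp_one_iff_integrable.1 (memLp_id_gaussianReal' 1 (by simp)))
  obtain ⟨hint₂, heq₂⟩ := hweighted (fun t => t ^ 2)
    (memLp_id_gaussianReal' 2 (by simp)).integrable_sq
  refine ⟨(integrable_gaussianPDFReal m v).const_mul c, hint₁, hint₂, ?_, ?_, ?_⟩
  · rw [integral_const_mul, integral_gaussianPDFReal_eq_one m hv, mul_one]
  · exact heq₁.trans (by rw [integral_id_gaussianReal])
  · exact heq₂.trans (by rw [integral_sq_gaussianReal])

lemma log_const_mul_gaussianPDFReal {c : ℝ} (hc : 0 < c) (hv : v ≠ 0) (t : ℝ) :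
    log (c * gaussianPDFReal m v t) =
      (log c - log √(2 * π * v) - m ^ 2 / (2 * v)) + m / v * t + -1 / (2 * v) * t ^ 2 := by
  rw [log_mul hc.ne' (gaussianPDFReal_pos _ _ _ hv).ne', gaussianPDFReal_def,
    log_mul (inv_ne_zero (by positivity)) (exp_ne_zero _), Real.log_inv, log_exp]
  ring

theorem Phi_phiBS_const_mul_gaussianPDFReal {c : ℝ} (hc : 0 < c) (hv : v ≠ 0) :
    Phi volume phiBS (fun t => c * gaussianPDFReal m v t) =
      (c * (log (c / √(2 * π * v)) - 1 / 2) : ℝ) := by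
  rw [Phi_phiBS_eq_of_log_eq_quadratic (log_const_mul_gaussianPDFReal hc hv)
    (fun t => mul_pos hc (gaussianPDFReal_pos _ _ _ hv))
    (hasMoments_const_mul_gaussianPDFReal hv c),
    log_div hc.ne' (by positivity), EReal.coe_eq_coe_iff]
  have hv' : (v : ℝ) ≠ 0 := NNReal.coe_ne_zero.2 hv
  field_simp
  ring

end Gaussian

section MomentParameters

variable {b₁ b₂ b₃ : ℝ}

-- the variance `b₃ / b₁ - (b₂ / b₁)²` of the probability density `x / b₁`
noncomputable def varianceOfMoments (b₁ b₂ b₃ : ℝ) : ℝ≥0 := ((b₁ * b₃ - b₂ ^ 2) / b₁ ^ 2).toNNReal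

lemma coe_varianceOfMoments (hD : 0 < b₁ * b₃ - b₂ ^ 2) :
    (varianceOfMoments b₁ b₂ b₃ : ℝ) = (b₁ * b₃ - b₂ ^ 2) / b₁ ^ 2 :=
  Real.coe_toNNReal _ (by positivity)

lemma varianceOfMoments_ne_zero (hb₁ : 0 < b₁) (hD : 0 < b₁ * b₃ - b₂ ^ 2) :
    varianceOfMoments b₁ b₂ b₃ ≠ 0 := by
  rw [← NNReal.coe_ne_zero, coe_varianceOfMoments hD]
  positivity

lemma sqrt_two_pi_varianceOfMoments (hb₁ : 0 < b₁) (hD : 0 < b₁ * b₃ - b₂ ^ 2) :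
    √(2 * π * varianceOfMoments b₁ b₂ b₃) = √(2 * π * (b₁ * b₃ - b₂ ^ 2)) / b₁ := by
  rw [coe_varianceOfMoments hD, mul_div_assoc', sqrt_div' _ (by positivity), sqrt_sq hb₁.le]

lemma eq_const_mul_gaussianPDFReal_varianceOfMoments (hb₁ : 0 < b₁)
    (hD : 0 < b₁ * b₃ - b₂ ^ 2) (t : ℝ) :
    b₁ ^ 2 / √(2 * π * (b₁ * b₃ - b₂ ^ 2)) *
        exp (-(1 / 2) * b₁ ^ 2 * (t - b₂ / b₁) ^ 2 / (b₁ * b₃ - b₂ ^ 2)) =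
      b₁ * gaussianPDFReal (b₂ / b₁) (varianceOfMoments b₁ b₂ b₃) t := by
  rw [gaussianPDFReal_def, sqrt_two_pi_varianceOfMoments hb₁ hD, coe_varianceOfMoments hD]
  field_simp

lemma hasMoments_gaussianPDFReal_varianceOfMoments (hb₁ : 0 < b₁) (hD : 0 < b₁ * b₃ - b₂ ^ 2) :
    HasMoments (fun t => b₁ * gaussianPDFReal (b₂ / b₁) (varianceOfMoments b₁ b₂ b₃) t)
      b₁ b₂ b₃ := by
  have h := hasMoments_const_mul_gaussianPDFReal (m := b₂ / b₁)
    (varianceOfMoments_ne_zero hb₁ hD) b₁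
  rwa [show b₁ * (b₂ / b₁) = b₂ by field_simp, coe_varianceOfMoments hD,
    show b₁ * ((b₁ * b₃ - b₂ ^ 2) / b₁ ^ 2 + (b₂ / b₁) ^ 2) = b₃ by field_simp; ring] at h

lemma log_div_sqrt_varianceOfMoments_sub_half (hb₁ : 0 < b₁) (hD : 0 < b₁ * b₃ - b₂ ^ 2) :
    Real.log (b₁ / √(2 * π * varianceOfMoments b₁ b₂ b₃)) - 1 / 2 =
      Real.log (b₁ ^ 2 / √(2 * π * exp 1 * (b₁ * b₃ - b₂ ^ 2))) := by
  have hsqrt_pos : 0 < √(2 * π * varianceOfMoments b₁ b₂ b₃) :=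
    sqrt_pos.2 (by rw [coe_varianceOfMoments hD]; positivity)
  have hsqrtD : √(2 * π * exp 1 * (b₁ * b₃ - b₂ ^ 2)) =
      b₁ * √(2 * π * varianceOfMoments b₁ b₂ b₃) * √(exp 1) := by
    rw [sqrt_two_pi_varianceOfMoments hb₁ hD, mul_div_cancel₀ _ hb₁.ne', ← sqrt_mul (by positivity),
      mul_right_comm]
  rw [log_div hb₁.ne' hsqrt_pos.ne', hsqrtD, log_div (by positivity) (by positivity),
    log_mul (by positivity) (by positivity), log_mul hb₁.ne' hsqrt_pos.ne',
    log_sqrt (exp_pos 1).le, log_exp, Real.log_pow]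
  ring

end MomentParameters

theorem stmt_19_general (b₁ b₂ b₃ : ℝ) (hb₁ : 0 < b₁)
    (hb₂ : |b₂| < Real.sqrt (b₁ * b₃))
    (xbar : ℝ → ℝ)
    (hxbar : xbar = fun t : ℝ =>
      b₁ ^ 2 / Real.sqrt (2 * Real.pi * (b₁ * b₃ - b₂ ^ 2)) *
        Real.exp (-(1 / 2) * b₁ ^ 2 * (t - b₂ / b₁) ^ 2 / (b₁ * b₃ - b₂ ^ 2)))
    (S : Set (ℝ → ℝ))
    (hS : S = {x : ℝ → ℝ | Measurable x ∧ (∀ᵐ t, 0 ≤ x t) ∧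
      Integrable x ∧ Integrable (fun t => t * x t) ∧ Integrable (fun t => t ^ 2 * x t) ∧
      (∫ t, x t) = b₁ ∧ (∫ t, t * x t) = b₂ ∧ (∫ t, t ^ 2 * x t) = b₃}) :
    xbar ∈ S ∧
      Phi volume phiBS xbar =
        ((b₁ * Real.log (b₁ ^ 2 / Real.sqrt (2 * Real.pi * Real.exp 1 * (b₁ * b₃ - b₂ ^ 2)))
          : ℝ) : EReal) ∧
      (∀ x ∈ S, Phi volume phiBS xbar ≤ Phi volume phiBS x) ∧
      (∀ x ∈ S, Phi volume phiBS x = Phi volume phiBS xbar → x =ᵐ[volume] xbar) := by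
  have hD : 0 < b₁ * b₃ - b₂ ^ 2 := by
    have h := (lt_sqrt (abs_nonneg b₂)).1 hb₂
    rw [sq_abs] at h
    linarith
  have hv := varianceOfMoments_ne_zero hb₁ hD
  have hmoments := hasMoments_gaussianPDFReal_varianceOfMoments hb₁ hD
  have hpos : ∀ t, 0 < b₁ * gaussianPDFReal (b₂ / b₁) (varianceOfMoments b₁ b₂ b₃) t :=
    fun t => mul_pos hb₁ (gaussianPDFReal_pos _ _ _ hv)
  obtain rfl : xbar = fun t => b₁ * gaussianPDFReal (b₂ / b₁) (varianceOfMoments b₁ b₂ b₃) t :=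
    hxbar.trans (funext (eq_const_mul_gaussianPDFReal_varianceOfMoments hb₁ hD))
  subst hS
  have hoptimal := fun x hx => Phi_phiBS_le_of_log_eq_quadratic (x := x)
    (log_const_mul_gaussianPDFReal hb₁ hv) hpos hmoments hx
  refine ⟨⟨by fun_prop, ae_of_all _ fun t => (hpos t).le, hmoments⟩, ?_,
    fun x hx => (hoptimal x hx).1, fun x hx => (hoptimal x hx).2⟩
  rw [Phi_phiBS_const_mul_gaussianPDFReal hb₁ hv, log_div_sqrt_varianceOfMoments_sub_half hb₁ hD]

/-- The Gaussian moment problem (PG)₃: minimize `∫ x ln x` subject to `∫ x = b₁`, `∫ t x = b₂`,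
`∫ t² x = b₃`. For `b₁, b₃ > 0` and `|b₂| < √(b₁b₃)`, the unique optimal solution is the Gaussian
`x̄(t) = (b₁²/√(2π(b₁b₃ - b₂²))) exp(-½ b₁²(t - b₂/b₁)²/(b₁b₃ - b₂²))` with optimal value
`b₁ ln(b₁²/√(2πe(b₁b₃ - b₂²)))`. (For `b = (1,0,σ²)` this is the standard Gaussian density
`(2πσ²)^{-1/2} e^{-t²/(2σ²)}` with value `-ln √(2πeσ²)`.) -/
theorem stmt_19 (b₁ b₂ b₃ : ℝ) (hb₁ : 0 < b₁) (hb₃ : 0 < b₃)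
    (hb₂ : |b₂| < Real.sqrt (b₁ * b₃))
    (xbar : ℝ → ℝ)
    (hxbar : xbar = fun t : ℝ =>
      b₁ ^ 2 / Real.sqrt (2 * Real.pi * (b₁ * b₃ - b₂ ^ 2)) *
        Real.exp (-(1 / 2) * b₁ ^ 2 * (t - b₂ / b₁) ^ 2 / (b₁ * b₃ - b₂ ^ 2)))
    (S : Set (ℝ → ℝ))
    (hS : S = {x : ℝ → ℝ | Measurable x ∧ (∀ᵐ t, 0 ≤ x t) ∧
      Integrable x ∧ Integrable (fun t => t * x t) ∧ Integrable (fun t => t ^ 2 * x t) ∧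
      (∫ t, x t) = b₁ ∧ (∫ t, t * x t) = b₂ ∧ (∫ t, t ^ 2 * x t) = b₃}) :
    xbar ∈ S ∧
      Phi volume phiBS xbar =
        ((b₁ * Real.log (b₁ ^ 2 / Real.sqrt (2 * Real.pi * Real.exp 1 * (b₁ * b₃ - b₂ ^ 2)))
          : ℝ) : EReal) ∧
      (∀ x ∈ S, Phi volume phiBS xbar ≤ Phi volume phiBS x) ∧
      (∀ x ∈ S, Phi volume phiBS x = Phi volume phiBS xbar → x =ᵐ[volume] xbar) :=
  stmt_19_general b₁ b₂ b₃ hb₁ hb₂ xbar hxbar S hS
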